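/- arXiv:1312.2302 — 2 statements merged into one kernel-verified Lean document; each statement's English description precedes it below -/
import Mathlib

section
/- Let f : [0,∞) → ℝ be continuous, nonincreasing and strictly positive, such that g(x) = x·f(x) is nonincreasing on [x₀,∞) for some x₀ ≥ 0 and g(x) → 0 as x → ∞; let ρ : [0,∞) → ℝ be continuous with 0 < ρ(x) ≤ 1 for all x. For a > 0 define F_a(x) = x·f(x)/√(2π) − a·ρ(x)·f(x). Then F_a attains its maximum over [0,∞): there exists m ∈ [0,∞) with F_a(m) = sup_{x≥0} F_a(x); moreover F_a(m) > 0 and every such maximizer m is strictly positive. -/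
open Set Filter Topology Real

/-!
At `x = 0` the Hamiltonian is `-a ρ(0) f(0) < 0`, while at `x₁ = (a + 1)√(2π)` the bound `ρ ≤ 1`
gives `F_a(x₁) ≥ f(x₁) > 0`. Far out `F_a(x) ≤ x f(x)/√(2π) → 0`, so `F_a` eventually stays below
`F_a(x₁)` and the extreme value theorem on `[0, ∞)` yields a maximizer; it cannot be `0`
because `F_a(0) < 0 < F_a(x₁)`.
-/

theorem ContinuousOn.exists_isMaxOn_Ici {α β : Type*} [LinearOrder α] [TopologicalSpace α]
    [OrderClosedTopology α] [CompactIccSpace α] [NoMaxOrder α] [NoMinOrder α]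
    [LinearOrder β] [TopologicalSpace β] [ClosedIciTopology β] {F : α → β} {b x₀ : α}
    (hF : ContinuousOn F (Ici b)) (hx₀ : b ≤ x₀) (h : ∀ᶠ x in atTop, F x ≤ F x₀) :
    ∃ m ∈ Ici b, IsMaxOn F (Ici b) m := by
  refine hF.exists_isMaxOn' isClosed_Ici hx₀ ?_
  rw [cocompact_eq_atBot_atTop, inf_sup_right, (disjoint_atBot_principal_Ici b).eq_bot,
    bot_sup_eq]
  exact h.filter_mono inf_le_left

noncomputable def mmHamiltonian (f ρ : ℝ → ℝ) (a x : ℝ) : ℝ :=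
  x * f x / √(2 * π) - a * ρ x * f x

section mmHamiltonian

variable {f ρ : ℝ → ℝ} {a : ℝ}

theorem mmHamiltonian_zero (ha : 0 < a) (hρ : 0 < ρ 0) (hf : 0 < f 0) :
    mmHamiltonian f ρ a 0 < 0 := by
  have : 0 < a * ρ 0 * f 0 := by positivity
  simp only [mmHamiltonian, zero_mul, zero_div]
  linarith

theorem mmHamiltonian_le_div_sqrt (ha : 0 ≤ a) {x : ℝ} (hρ : 0 ≤ ρ x) (hf : 0 ≤ f x) :
    mmHamiltonian f ρ a x ≤ x * f x / √(2 * π) := by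
  have : 0 ≤ a * ρ x * f x := by positivity
  unfold mmHamiltonian
  linarith

theorem le_mmHamiltonian_of_add_one_mul_sqrt_le (ha : 0 ≤ a) {x : ℝ}
    (hx : (a + 1) * √(2 * π) ≤ x) (hρ : ρ x ≤ 1) (hf : 0 ≤ f x) :
    f x ≤ mmHamiltonian f ρ a x := by
  have hdiv : (a + 1) * f x ≤ x * f x / √(2 * π) := by
    rw [le_div_iff₀ (by positivity), mul_right_comm]
    exact mul_le_mul_of_nonneg_right hx hf
  have : a * ρ x * f x ≤ a * f x := by
    rw [mul_assoc]
    exact mul_le_mul_of_nonneg_left (mul_le_of_le_one_left hf hρ) ha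
  unfold mmHamiltonian
  linarith

theorem continuousOn_mmHamiltonian {s : Set ℝ} (hf : ContinuousOn f s) (hρ : ContinuousOn ρ s) :
    ContinuousOn (mmHamiltonian f ρ a) s :=
  ((continuousOn_id.mul hf).div_const _).sub ((continuousOn_const.mul hρ).mul hf)

theorem eventually_mmHamiltonian_lt (ha : 0 ≤ a) (hρ : ∀ x, 0 ≤ x → 0 ≤ ρ x)
    (hf : ∀ x, 0 ≤ x → 0 ≤ f x) (hlim : Tendsto (fun x => x * f x) atTop (𝓝 0))
    {ε : ℝ} (hε : 0 < ε) : ∀ᶠ x in atTop, mmHamiltonian f ρ a x < ε := by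
  have hsmall : ∀ᶠ x in atTop, x * f x / √(2 * π) < ε :=
    (hlim.div_const _).eventually (gt_mem_nhds (by simpa using hε))
  filter_upwards [hsmall, eventually_ge_atTop 0] with x hx hx0
  exact (mmHamiltonian_le_div_sqrt ha (hρ x hx0) (hf x hx0)).trans_lt hx

end mmHamiltonian

theorem market_maker_hamiltonian_max_general
    (f ρ : ℝ → ℝ)
    (hfc : ContinuousOn f (Ici 0))
    (hfpos : ∀ x, 0 ≤ x → 0 < f x)
    (hglim : Filter.Tendsto (fun x => x * f x) Filter.atTop (nhds 0))
    (hρc : ContinuousOn ρ (Ici 0))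
    (hρpos : ∀ x, 0 ≤ x → 0 < ρ x) (hρle : ∀ x, 0 ≤ x → ρ x ≤ 1)
    (a : ℝ) (ha : 0 < a)
    (Fa : ℝ → ℝ)
    (hFa : ∀ x, Fa x = x * f x / Real.sqrt (2 * Real.pi) - a * ρ x * f x) :
    ∃ m, 0 ≤ m ∧ (∀ x, 0 ≤ x → Fa x ≤ Fa m) ∧ 0 < Fa m ∧
      ∀ m', 0 ≤ m' → (∀ x, 0 ≤ x → Fa x ≤ Fa m') → 0 < m' := by
  obtain rfl : Fa = mmHamiltonian f ρ a := funext hFa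
  set x₁ := (a + 1) * √(2 * π)
  have hx₁ : 0 ≤ x₁ := by positivity
  have hFx₁ : 0 < mmHamiltonian f ρ a x₁ := (hfpos x₁ hx₁).trans_le
    (le_mmHamiltonian_of_add_one_mul_sqrt_le ha.le le_rfl (hρle x₁ hx₁) (hfpos x₁ hx₁).le)
  have hF0 : mmHamiltonian f ρ a 0 < 0 := mmHamiltonian_zero ha (hρpos 0 le_rfl) (hfpos 0 le_rfl)
  obtain ⟨m, hm, hmax⟩ := (continuousOn_mmHamiltonian hfc hρc).exists_isMaxOn_Ici hx₁
    ((eventually_mmHamiltonian_lt ha.le (fun x hx => (hρpos x hx).le)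
      (fun x hx => (hfpos x hx).le) hglim hFx₁).mono fun _ => le_of_lt)
  refine ⟨m, hm, fun x hx => hmax hx, hFx₁.trans_le (hmax hx₁), fun m' hm' hmax' => ?_⟩
  exact hm'.lt_of_ne fun h => (hF0.trans hFx₁).not_ge (h ▸ hmax' x₁ hx₁)

/-- In the market-making model, with a continuous, nonincreasing, strictly
positive fill-rate function `f` on `[0,∞)` such that `g(x) = x·f(x)` is nonincreasing on
`[x₀, ∞)` and tends to `0` at `∞`, and a continuous toxicity function `ρ` with
`0 < ρ(x) ≤ 1`, the function `F_a(x) = x·f(x)/√(2π) - a·ρ(x)·f(x)` attains its maximum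
over `[0,∞)` for every `a > 0`; moreover the maximum value is strictly positive and every
maximizer is strictly positive. -/
theorem market_maker_hamiltonian_max
    (f ρ : ℝ → ℝ)
    (hfc : ContinuousOn f (Ici 0)) (hfanti : AntitoneOn f (Ici 0))
    (hfpos : ∀ x, 0 ≤ x → 0 < f x)
    (x₀ : ℝ) (hx₀ : 0 ≤ x₀) (hganti : AntitoneOn (fun x => x * f x) (Ici x₀))
    (hglim : Filter.Tendsto (fun x => x * f x) Filter.atTop (nhds 0))
    (hρc : ContinuousOn ρ (Ici 0))
    (hρpos : ∀ x, 0 ≤ x → 0 < ρ x) (hρle : ∀ x, 0 ≤ x → ρ x ≤ 1)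
    (a : ℝ) (ha : 0 < a)
    (Fa : ℝ → ℝ)
    (hFa : ∀ x, Fa x = x * f x / Real.sqrt (2 * Real.pi) - a * ρ x * f x) :
    ∃ m, 0 ≤ m ∧ (∀ x, 0 ≤ x → Fa x ≤ Fa m) ∧ 0 < Fa m ∧
      ∀ m', 0 ≤ m' → (∀ x, 0 ≤ x → Fa x ≤ Fa m') → 0 < m' :=
  market_maker_hamiltonian_max_general f ρ hfc hfpos hglim hρc hρpos hρle a ha Fa hFa
end

section
/- Let f : [0,∞) → ℝ be continuous, nonincreasing and strictly positive, such that g(x) = x·f(x) is nonincreasing on [x₀,∞) for some x₀ ≥ 0 and g(x) → 0 as x → ∞; let ρ : [0,∞) → ℝ be continuous with 0 < ρ(x) ≤ 1 for all x. For a > 0 define F_a(x) = x·f(x)/√(2π) − a·ρ(x)·f(x) and M(a) = sup_{x ∈ [0,∞)} F_a(x). Then M is strictly decreasing on (0,∞): for all 0 < a < a', M(a') < M(a). -/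
/-!
For each `a > 0` the function `F_a` is continuous on `[0, ∞)`, positive at `x = a√(2π) + 1`, and
eventually below that value since `F_a(x) ≤ x f(x)/√(2π) → 0`; so its supremum is a maximum,
attained at some `w`. For `a < a'`, as `ρ f > 0`, `M(a') = F_{a'}(w) < F_a(w) ≤ M(a)`.
-/

open Set Filter

theorem ContinuousOn.exists_isMaxOn_Ici_s19 {α : Type*} [ConditionallyCompleteLinearOrder α]
    [TopologicalSpace α] [OrderTopology α] [NoMaxOrder α] [NoMinOrder α]
    {β : Type*} [LinearOrder β] [TopologicalSpace β] [ClosedIciTopology β] {g : α → β} {c x₁ : α}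
    (hg : ContinuousOn g (Ici c)) (hx₁ : c ≤ x₁) (hgx₁ : ∀ᶠ x in atTop, g x ≤ g x₁) :
    ∃ w ∈ Ici c, IsMaxOn g (Ici c) w := by
  refine hg.exists_isMaxOn' isClosed_Ici hx₁ ?_
  rw [cocompact_eq_atBot_atTop, inf_sup_right, (disjoint_atBot_principal_Ici c).eq_bot,
    bot_sup_eq]
  exact hgx₁.filter_mono inf_le_left

theorem IsMaxOn.csSup_image_eq {α β : Type*} [ConditionallyCompleteLattice β] {g : α → β}
    {s : Set α} {w : α} (hg : IsMaxOn g s w) (hw : w ∈ s) : sSup (g '' s) = g w :=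
  IsGreatest.csSup_eq ⟨mem_image_of_mem g hw, by rintro _ ⟨x, hx, rfl⟩; exact hg hx⟩

namespace MarketMaking

noncomputable def hamiltonian (f ρ : ℝ → ℝ) (a x : ℝ) : ℝ :=
  x * f x / Real.sqrt (2 * Real.pi) - a * ρ x * f x

variable {f ρ : ℝ → ℝ} {a a' x : ℝ}

lemma hamiltonian_le (ha : 0 ≤ a) (hρ : 0 ≤ ρ x) (hf : 0 ≤ f x) :
    hamiltonian f ρ a x ≤ x * f x / Real.sqrt (2 * Real.pi) := by
  unfold hamiltonian
  have : 0 ≤ a * ρ x * f x := by positivity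
  linarith

lemma hamiltonian_lt_of_lt (hlt : a < a') (hρ : 0 < ρ x) (hf : 0 < f x) :
    hamiltonian f ρ a' x < hamiltonian f ρ a x := by
  unfold hamiltonian
  have : a * ρ x * f x < a' * ρ x * f x := by gcongr
  linarith

/-- At `x = a√(2π) + 1` the profit term beats the adverse selection cost `a ρ f ≤ a f`. -/
lemma hamiltonian_pos (ha : 0 ≤ a) (hρ : ρ (a * Real.sqrt (2 * Real.pi) + 1) ≤ 1)
    (hf : 0 < f (a * Real.sqrt (2 * Real.pi) + 1)) :
    0 < hamiltonian f ρ a (a * Real.sqrt (2 * Real.pi) + 1) := by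
  set s := Real.sqrt (2 * Real.pi)
  set x := a * s + 1 with hx
  have hs : 0 < s := by positivity
  have hprofit : x * f x / s = a * f x + f x / s := by rw [hx]; field_simp
  have hcost : a * ρ x * f x ≤ a * f x := by gcongr; exact mul_le_of_le_one_right ha hρ
  have : 0 < f x / s := by positivity
  unfold hamiltonian
  linarith

lemma exists_isMaxOn_hamiltonian (hfc : ContinuousOn f (Ici 0))
    (hfpos : ∀ x, 0 ≤ x → 0 < f x) (hglim : Tendsto (fun x => x * f x) atTop (nhds 0))
    (hρc : ContinuousOn ρ (Ici 0)) (hρnonneg : ∀ x, 0 ≤ x → 0 ≤ ρ x)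
    (hρle : ∀ x, 0 ≤ x → ρ x ≤ 1) (ha : 0 ≤ a) :
    ∃ w ∈ Ici 0, IsMaxOn (hamiltonian f ρ a) (Ici 0) w := by
  set s := Real.sqrt (2 * Real.pi)
  have hs : 0 < s := by positivity
  have hx₁ : 0 ≤ a * s + 1 := by positivity
  have hpos := hamiltonian_pos ha (hρle _ hx₁) (hfpos _ hx₁)
  have hcont : ContinuousOn (hamiltonian f ρ a) (Ici 0) :=
    ((continuousOn_id.mul hfc).div_const _).sub ((continuousOn_const.mul hρc).mul hfc)
  refine hcont.exists_isMaxOn_Ici_s19 hx₁ ?_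
  filter_upwards [hglim.eventually (eventually_lt_nhds (mul_pos hpos hs)), eventually_ge_atTop 0]
    with y hy hy₀
  calc hamiltonian f ρ a y ≤ y * f y / s := hamiltonian_le ha (hρnonneg y hy₀) (hfpos y hy₀).le
    _ ≤ hamiltonian f ρ a (a * s + 1) := (div_le_iff₀ hs).mpr hy.le

end MarketMaking

open MarketMaking in
theorem market_maker_value_strict_anti_general
    (f ρ : ℝ → ℝ)
    (hfc : ContinuousOn f (Ici 0))
    (hfpos : ∀ x, 0 ≤ x → 0 < f x)
    (hglim : Filter.Tendsto (fun x => x * f x) Filter.atTop (nhds 0))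
    (hρc : ContinuousOn ρ (Ici 0))
    (hρpos : ∀ x, 0 ≤ x → 0 < ρ x) (hρle : ∀ x, 0 ≤ x → ρ x ≤ 1)
    (M : ℝ → ℝ)
    (hM : ∀ a, M a
      = sSup ((fun x => x * f x / Real.sqrt (2 * Real.pi) - a * ρ x * f x) '' Ici 0)) :
    StrictAntiOn M (Ioi 0) := by
  have hmax : ∀ a : ℝ, 0 < a → ∃ w ∈ Ici 0, IsMaxOn (hamiltonian f ρ a) (Ici 0) w :=
    fun a ha => exists_isMaxOn_hamiltonian hfc hfpos hglim hρc (fun x hx => (hρpos x hx).le)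
      hρle ha.le
  intro a ha a' ha' hlt
  obtain ⟨v, hv, hvmax⟩ := hmax a ha
  obtain ⟨w, hw, hwmax⟩ := hmax a' ha'
  calc M a' = hamiltonian f ρ a' w := (hM a').trans (hwmax.csSup_image_eq hw)
    _ < hamiltonian f ρ a w := hamiltonian_lt_of_lt hlt (hρpos w hw) (hfpos w hw)
    _ ≤ hamiltonian f ρ a v := hvmax hw
    _ = M a := ((hM a).trans (hvmax.csSup_image_eq hv)).symm

/-- With `f`, `ρ` as in the market-making model (continuous, nonincreasing,
strictly positive fill rate `f` with `x·f(x)` eventually nonincreasing and tending to `0`,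
and continuous toxicity `ρ` with `0 < ρ ≤ 1`), the optimized Hamiltonian
`M(a) = sup_{x ≥ 0} (x·f(x)/√(2π) - a·ρ(x)·f(x))` is strictly decreasing on `(0, ∞)`: for all `0 < a < a'`, `M(a') < M(a)`. -/
theorem market_maker_value_strict_anti
    (f ρ : ℝ → ℝ)
    (hfc : ContinuousOn f (Ici 0)) (hfanti : AntitoneOn f (Ici 0))
    (hfpos : ∀ x, 0 ≤ x → 0 < f x)
    (x₀ : ℝ) (hx₀ : 0 ≤ x₀) (hganti : AntitoneOn (fun x => x * f x) (Ici x₀))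
    (hglim : Filter.Tendsto (fun x => x * f x) Filter.atTop (nhds 0))
    (hρc : ContinuousOn ρ (Ici 0))
    (hρpos : ∀ x, 0 ≤ x → 0 < ρ x) (hρle : ∀ x, 0 ≤ x → ρ x ≤ 1)
    (M : ℝ → ℝ)
    (hM : ∀ a, M a
      = sSup ((fun x => x * f x / Real.sqrt (2 * Real.pi) - a * ρ x * f x) '' Ici 0)) :
    StrictAntiOn M (Ioi 0) :=
  market_maker_value_strict_anti_general f ρ hfc hfpos hglim hρc hρpos hρle M hM
end
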